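/- For the specific data x = (1, 2, ..., n) and y = (0, 1, 0, 1, ..., 1, 0) with n odd, Chatterjee's coefficient evaluates to ξ_n(x,y) = 1 - 2n/(n+1), which is strictly less than -ξ_n(y,y) = -(1 - 2n/(n²-1)). -/
import Mathlib


/-- Rank `r i`: the number of indices `j < n` with `y j ≤ y i`. -/
noncomputable def chatterjeeRank (y : ℕ → ℝ) (n i : ℕ) : ℕ :=
  ((Finset.range n).filter (fun j => y j ≤ y i)).card

/-- `l i`: the number of indices `j < n` with `y j ≥ y i`. -/
noncomputable def chatterjeeL (y : ℕ → ℝ) (n i : ℕ) : ℕ :=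
  ((Finset.range n).filter (fun j => y i ≤ y j)).card

/-- Chatterjee's coefficient `ξₙ` computed from the sequence of y-values
(listed in the order of increasing x-values). -/
noncomputable def chatterjeeXi (y : ℕ → ℝ) (n : ℕ) : ℝ :=
  1 - ((n : ℝ) * ∑ i ∈ Finset.range (n - 1),
        |((chatterjeeRank y n (i + 1) : ℝ)) - ((chatterjeeRank y n i : ℝ))|) /
      (2 * ∑ i ∈ Finset.range n,
        ((chatterjeeL y n i : ℝ) * ((n : ℝ) - (chatterjeeL y n i : ℝ))))

lemma count_even (k : ℕ) : ((Finset.range (2*k+1)).filter (fun j => j % 2 = 0)).card = k + 1 := by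
  induction k with
  | zero => decide
  | succ k ih =>
    have h : 2*(k+1)+1 = (2*k+1) + 1 + 1 := by ring
    rw [h, Finset.range_add_one, Finset.range_add_one, Finset.filter_insert, Finset.filter_insert]
    have h1 : (2*k+1) % 2 = 1 := by omega
    have h2 : (2*k+1+1) % 2 = 0 := by omega
    simp only [h1, h2]
    norm_num
    exact ih

lemma count_odd (k : ℕ) : ((Finset.range (2*k+1)).filter (fun j => ¬ j % 2 = 0)).card = k := by
  have := Finset.card_filter_add_card_filter_not (s := Finset.range (2*k+1))
    (p := fun j => j % 2 = 0)
  rw [count_even, Finset.card_range] at this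
  omega


lemma rank1 (k i : ℕ) :
    chatterjeeRank (fun i => if i % 2 = 0 then (0 : ℝ) else 1) (2*k+1) i =
      if i % 2 = 0 then k + 1 else 2*k+1 := by
  unfold chatterjeeRank
  by_cases hi : i % 2 = 0
  · rw [if_pos hi]
    have h : ∀ j ∈ Finset.range (2*k+1),
        ((if j % 2 = 0 then (0:ℝ) else 1) ≤ if i % 2 = 0 then (0:ℝ) else 1) ↔ j % 2 = 0 := by
      intro j _; rw [if_pos hi]; by_cases hj : j % 2 = 0 <;> simp [hj]
    rw [Finset.filter_congr h, count_even]
  · rw [if_neg hi]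
    have h : ∀ j ∈ Finset.range (2*k+1),
        ((if j % 2 = 0 then (0:ℝ) else 1) ≤ if i % 2 = 0 then (0:ℝ) else 1) := by
      intro j _; rw [if_neg hi]; by_cases hj : j % 2 = 0 <;> simp [hj]
    rw [Finset.filter_true_of_mem h, Finset.card_range]

lemma l1 (k i : ℕ) :
    chatterjeeL (fun i => if i % 2 = 0 then (0 : ℝ) else 1) (2*k+1) i =
      if i % 2 = 0 then 2*k+1 else k := by
  unfold chatterjeeL
  by_cases hi : i % 2 = 0
  · rw [if_pos hi]
    have h : ∀ j ∈ Finset.range (2*k+1),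
        ((if i % 2 = 0 then (0:ℝ) else 1) ≤ if j % 2 = 0 then (0:ℝ) else 1) := by
      intro j _; rw [if_pos hi]; by_cases hj : j % 2 = 0 <;> simp [hj]
    rw [Finset.filter_true_of_mem h, Finset.card_range]
  · rw [if_neg hi]
    have h : ∀ j ∈ Finset.range (2*k+1),
        ((if i % 2 = 0 then (0:ℝ) else 1) ≤ if j % 2 = 0 then (0:ℝ) else 1) ↔ ¬ j % 2 = 0 := by
      intro j _; rw [if_neg hi]; by_cases hj : j % 2 = 0 <;> simp [hj]
    rw [Finset.filter_congr h, count_odd]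

lemma rank2 (k i : ℕ) :
    chatterjeeRank (fun i => if i < k + 1 then (0 : ℝ) else 1) (2*k+1) i =
      if i < k + 1 then k + 1 else 2*k+1 := by
  unfold chatterjeeRank
  by_cases hi : i < k + 1
  · rw [if_pos hi]
    have h : ∀ j ∈ Finset.range (2*k+1),
        ((if j < k + 1 then (0:ℝ) else 1) ≤ if i < k + 1 then (0:ℝ) else 1) ↔ j < k + 1 := by
      intro j _; rw [if_pos hi]; by_cases hj : j < k + 1 <;> simp [hj]
    rw [Finset.filter_congr h]
    have : (Finset.range (2*k+1)).filter (fun j => j < k + 1) = Finset.range (k+1) := by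
      ext j; simp only [Finset.mem_filter, Finset.mem_range]; omega
    rw [this, Finset.card_range]
  · rw [if_neg hi]
    have h : ∀ j ∈ Finset.range (2*k+1),
        ((if j < k + 1 then (0:ℝ) else 1) ≤ if i < k + 1 then (0:ℝ) else 1) := by
      intro j _; rw [if_neg hi]; by_cases hj : j < k + 1 <;> simp [hj]
    rw [Finset.filter_true_of_mem h, Finset.card_range]

lemma l2 (k i : ℕ) :
    chatterjeeL (fun i => if i < k + 1 then (0 : ℝ) else 1) (2*k+1) i =
      if i < k + 1 then 2*k+1 else k := by
  unfold chatterjeeL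
  by_cases hi : i < k + 1
  · rw [if_pos hi]
    have h : ∀ j ∈ Finset.range (2*k+1),
        ((if i < k + 1 then (0:ℝ) else 1) ≤ if j < k + 1 then (0:ℝ) else 1) := by
      intro j _; rw [if_pos hi]; by_cases hj : j < k + 1 <;> simp [hj]
    rw [Finset.filter_true_of_mem h, Finset.card_range]
  · rw [if_neg hi]
    have h : ∀ j ∈ Finset.range (2*k+1),
        ((if i < k + 1 then (0:ℝ) else 1) ≤ if j < k + 1 then (0:ℝ) else 1) ↔ ¬ j < k + 1 := by
      intro j _; rw [if_neg hi]; by_cases hj : j < k + 1 <;> simp [hj]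
    rw [Finset.filter_congr h]
    have : (Finset.range (2*k+1)).filter (fun j => ¬ j < k + 1) = Finset.Ico (k+1) (2*k+1) := by
      ext j; simp only [Finset.mem_filter, Finset.mem_range, Finset.mem_Ico]; omega
    rw [this, Nat.card_Ico]; omega

lemma sumnum1 (k : ℕ) :
    ∑ i ∈ Finset.range (2*k+1 - 1),
      |((chatterjeeRank (fun i => if i % 2 = 0 then (0 : ℝ) else 1) (2*k+1) (i + 1) : ℝ)) -
        ((chatterjeeRank (fun i => if i % 2 = 0 then (0 : ℝ) else 1) (2*k+1) i : ℝ))| =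
    2 * k * k := by
  have h : ∀ i ∈ Finset.range (2*k+1-1),
      |((chatterjeeRank (fun i => if i % 2 = 0 then (0 : ℝ) else 1) (2*k+1) (i + 1) : ℝ)) -
        ((chatterjeeRank (fun i => if i % 2 = 0 then (0 : ℝ) else 1) (2*k+1) i : ℝ))| = (k : ℝ) := by
    intro i _
    rw [rank1, rank1]
    by_cases hi : i % 2 = 0
    · have hi1 : ¬ (i+1) % 2 = 0 := by omega
      rw [if_neg hi1, if_pos hi]
      rw [show ((2*k+1 : ℕ) : ℝ) - ((k+1 : ℕ) : ℝ) = (k : ℝ) by push_cast; ring]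
      exact abs_of_nonneg (by positivity)
    · have hi1 : (i+1) % 2 = 0 := by omega
      rw [if_pos hi1, if_neg hi]
      rw [show ((k+1 : ℕ) : ℝ) - ((2*k+1 : ℕ) : ℝ) = -(k : ℝ) by push_cast; ring, abs_neg]
      exact abs_of_nonneg (by positivity)
  rw [Finset.sum_congr rfl h, Finset.sum_const, Finset.card_range]
  push_cast
  ring

lemma sumden1 (k : ℕ) :
    ∑ i ∈ Finset.range (2*k+1),
      ((chatterjeeL (fun i => if i % 2 = 0 then (0 : ℝ) else 1) (2*k+1) i : ℝ) *
        (((2*k+1 : ℕ) : ℝ) - (chatterjeeL (fun i => if i % 2 = 0 then (0 : ℝ) else 1) (2*k+1) i : ℝ))) =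
    k * (k * (k+1)) := by
  rw [← Finset.sum_filter_add_sum_filter_not (Finset.range (2*k+1)) (fun i => i % 2 = 0)]
  have h1 : ∀ i ∈ (Finset.range (2*k+1)).filter (fun i => i % 2 = 0),
      ((chatterjeeL (fun i => if i % 2 = 0 then (0 : ℝ) else 1) (2*k+1) i : ℝ) *
        (((2*k+1 : ℕ) : ℝ) - (chatterjeeL (fun i => if i % 2 = 0 then (0 : ℝ) else 1) (2*k+1) i : ℝ))) = 0 := by
    intro i hi
    rw [l1, if_pos (Finset.mem_filter.mp hi).2]
    ring
  have h2 : ∀ i ∈ (Finset.range (2*k+1)).filter (fun i => ¬ i % 2 = 0),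
      ((chatterjeeL (fun i => if i % 2 = 0 then (0 : ℝ) else 1) (2*k+1) i : ℝ) *
        (((2*k+1 : ℕ) : ℝ) - (chatterjeeL (fun i => if i % 2 = 0 then (0 : ℝ) else 1) (2*k+1) i : ℝ))) =
      (k : ℝ) * ((k : ℝ) + 1) := by
    intro i hi
    rw [l1, if_neg (Finset.mem_filter.mp hi).2]
    push_cast
    ring
  rw [Finset.sum_congr rfl h1, Finset.sum_congr rfl h2, Finset.sum_const, Finset.sum_const,
    count_odd]
  push_cast
  ring

lemma sumnum2 (k : ℕ) (hk : 1 ≤ k) :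
    ∑ i ∈ Finset.range (2*k+1 - 1),
      |((chatterjeeRank (fun i => if i < k + 1 then (0 : ℝ) else 1) (2*k+1) (i + 1) : ℝ)) -
        ((chatterjeeRank (fun i => if i < k + 1 then (0 : ℝ) else 1) (2*k+1) i : ℝ))| = k := by
  rw [Finset.sum_eq_single_of_mem k (by simp; omega)]
  · rw [rank2, rank2, if_neg (by omega), if_pos (by omega)]
    rw [show ((2*k+1 : ℕ) : ℝ) - ((k+1 : ℕ) : ℝ) = (k : ℝ) by push_cast; ring]
    exact abs_of_nonneg (by positivity)
  · intro i _ hne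
    rw [rank2, rank2]
    by_cases hi : i < k
    · rw [if_pos (by omega), if_pos (by omega)]; simp
    · rw [if_neg (by omega), if_neg (by omega)]; simp

lemma sumden2 (k : ℕ) :
    ∑ i ∈ Finset.range (2*k+1),
      ((chatterjeeL (fun i => if i < k + 1 then (0 : ℝ) else 1) (2*k+1) i : ℝ) *
        (((2*k+1 : ℕ) : ℝ) - (chatterjeeL (fun i => if i < k + 1 then (0 : ℝ) else 1) (2*k+1) i : ℝ))) =
    k * (k * (k+1)) := by
  rw [← Finset.sum_filter_add_sum_filter_not (Finset.range (2*k+1)) (fun i => i < k + 1)]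
  have h1 : ∀ i ∈ (Finset.range (2*k+1)).filter (fun i => i < k + 1),
      ((chatterjeeL (fun i => if i < k + 1 then (0 : ℝ) else 1) (2*k+1) i : ℝ) *
        (((2*k+1 : ℕ) : ℝ) - (chatterjeeL (fun i => if i < k + 1 then (0 : ℝ) else 1) (2*k+1) i : ℝ))) = 0 := by
    intro i hi
    rw [l2, if_pos (Finset.mem_filter.mp hi).2]
    ring
  have h2 : ∀ i ∈ (Finset.range (2*k+1)).filter (fun i => ¬ i < k + 1),
      ((chatterjeeL (fun i => if i < k + 1 then (0 : ℝ) else 1) (2*k+1) i : ℝ) *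
        (((2*k+1 : ℕ) : ℝ) - (chatterjeeL (fun i => if i < k + 1 then (0 : ℝ) else 1) (2*k+1) i : ℝ))) =
      (k : ℝ) * ((k : ℝ) + 1) := by
    intro i hi
    rw [l2, if_neg (Finset.mem_filter.mp hi).2]
    push_cast
    ring
  have hcard : ((Finset.range (2*k+1)).filter (fun i => ¬ i < k + 1)).card = k := by
    have : (Finset.range (2*k+1)).filter (fun i => ¬ i < k + 1) = Finset.Ico (k+1) (2*k+1) := by
      ext j; simp only [Finset.mem_filter, Finset.mem_range, Finset.mem_Ico]; omega
    rw [this, Nat.card_Ico]; omega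
  rw [Finset.sum_congr rfl h1, Finset.sum_congr rfl h2, Finset.sum_const, Finset.sum_const, hcard]
  push_cast
  ring

/-- For x = (1,…,n) and the alternating sequence y = (0,1,0,1,…,1,0) with n odd,
`ξₙ(x,y) = 1 - 2n/(n+1)`, which is strictly smaller than
`-ξₙ(y,y) = -(1 - 2n/(n²-1))` (where `ξₙ(y,y)` is computed from the ascending
rearrangement of y). -/
theorem xi_alternating_example
    (n : ℕ) (hodd : Odd n) (hn : 3 ≤ n) :
    chatterjeeXi (fun i => if i % 2 = 0 then (0 : ℝ) else 1) n =
      1 - 2 * (n : ℝ) / ((n : ℝ) + 1) ∧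
    chatterjeeXi (fun i => if i < (n + 1) / 2 then (0 : ℝ) else 1) n =
      1 - 2 * (n : ℝ) / ((n : ℝ) ^ 2 - 1) ∧
    1 - 2 * (n : ℝ) / ((n : ℝ) + 1) < -(1 - 2 * (n : ℝ) / ((n : ℝ) ^ 2 - 1)) := by
  obtain ⟨k, hk⟩ := hodd
  subst hk
  have hk1 : 1 ≤ k := by omega
  have hk0 : (0:ℝ) < (k:ℝ) := by exact_mod_cast hk1
  have hdiv : (2*k+1+1)/2 = k + 1 := by omega
  refine ⟨?_, ?_, ?_⟩
  · unfold chatterjeeXi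
    rw [sumnum1, sumden1]
    push_cast
    field_simp
    ring
  · unfold chatterjeeXi
    rw [hdiv, sumnum2 k hk1, sumden2]
    push_cast
    congr 1
    rw [div_eq_div_iff (by positivity) (by nlinarith)]
    ring
  · have h1 : (0:ℝ) < 2*(k:ℝ)+1+1 := by positivity
    have h2 : (0:ℝ) < (2*(k:ℝ)+1)^2 - 1 := by nlinarith
    push_cast
    have eL : (1:ℝ) - 2*(2*(k:ℝ)+1)/(2*(k:ℝ)+1+1) = (-(2*(k:ℝ)))/(2*(k:ℝ)+1+1) := by
      rw [eq_div_iff (ne_of_gt h1)]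
      field_simp
      ring
    have eR : -((1:ℝ) - 2*(2*(k:ℝ)+1)/((2*(k:ℝ)+1)^2-1)) =
        (2 - 4*(k:ℝ)^2)/((2*(k:ℝ)+1)^2-1) := by
      rw [neg_sub, sub_eq_iff_eq_add, div_add' _ _ _ (ne_of_gt h2),
        div_eq_div_iff (ne_of_gt h2) (ne_of_gt h2)]
      ring
    rw [eL, eR, div_lt_div_iff₀ h1 h2]
    nlinarith
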